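/- If two sets of degrees of freedom take equal-sized steps using update rules Δy^A = ∑_i k^A_i D^A(q_i) and Δy^B = ∑_i k^B_i D^B(q_i) with the same evaluation states q_i, and if for every linear conserved quantity c (i.e., c · D(y) = 0 for all y) we require Δ(c·y) = 0 for all possible derivative operators D restricted only by the conservation condition, then k^A_i = k^B_i for all i (the two sets must use the same step rule). -/

import Mathlib

/-!
Conservation of `c · y` lets one trade the `A`-part of the conserved change for the `B`-part, so
the change becomes `∑ i, (k^B_i - k^A_i) (c^B · D^B)(q_i)`. A conservative system can give
`c^B · D^B` any prescribed values (put the opposite value into `c^A · D^A`), so the weights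
`k^B_i - k^A_i` at the distinct states `q_i` must all vanish.
-/

open Finset Function

section ConservedChange

variable {ι S α β : Type*} [Fintype ι] [Fintype α] [Fintype β]

theorem sum_mul_sum_weighted_comm (c : α → ℝ) (k : ι → ℝ) (q : ι → S)
    (D : S → α → ℝ) :
    ∑ a, c a * ∑ i, k i * D (q i) a = ∑ i, k i * ∑ a, c a * D (q i) a := by
  simp_rw [mul_sum]
  rw [sum_comm]
  simp_rw [mul_left_comm]

theorem conserved_change_eq_sum_sub {kA kB : ι → ℝ} {q : ι → S} {DA : S → α → ℝ}
    {DB : S → β → ℝ} {cA : α → ℝ} {cB : β → ℝ}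
    (hD : ∀ y, ∑ a, cA a * DA y a + ∑ b, cB b * DB y b = 0) :
    ∑ a, cA a * ∑ i, kA i * DA (q i) a + ∑ b, cB b * ∑ i, kB i * DB (q i) b =
      ∑ i, (kB i - kA i) * ∑ b, cB b * DB (q i) b := by
  have hA : ∀ y, ∑ a, cA a * DA y a = -∑ b, cB b * DB y b := fun y =>
    eq_neg_of_add_eq_zero_left (hD y)
  simp_rw [sum_mul_sum_weighted_comm, hA, sub_mul, sum_sub_distrib, mul_neg, sum_neg_distrib]
  ring

theorem exists_conservative_with_component [Nonempty α] [Nonempty β] (g : S → ℝ) :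
    ∃ (DA : S → α → ℝ) (DB : S → β → ℝ) (cA : α → ℝ) (cB : β → ℝ),
      (∀ y, ∑ a, cA a * DA y a + ∑ b, cB b * DB y b = 0) ∧
        ∀ y, ∑ b, cB b * DB y b = g y := by
  classical
  obtain ⟨a₀⟩ := ‹Nonempty α›
  obtain ⟨b₀⟩ := ‹Nonempty β›
  refine ⟨fun y _ => -g y, fun y _ => g y, Pi.single a₀ 1, Pi.single b₀ 1,
    fun y => ?_, fun y => ?_⟩ <;> simp [Pi.single_apply]

end ConservedChange

theorem eq_zero_of_forall_sum_mul_comp_eq_zero {ι S : Type*} [Fintype ι] {q : ι → S}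
    (hq : Injective q) {w : ι → ℝ} (h : ∀ g : S → ℝ, ∑ i, w i * g (q i) = 0) (j : ι) :
    w j = 0 := by
  classical
  simpa [hq.eq_iff] using h fun s => if s = q j then 1 else 0

/-- If two sets of degrees of freedom take equal-sized steps with the same
    evaluation states, and every linear conserved quantity is preserved for
    every derivative operator satisfying the conservation condition, then the
    two sets must use the same step rule: k^A_i = k^B_i. -/
theorem conservative_equal_steps_same_rule
    (dA dB : ℕ) (hdA : 1 ≤ dA) (hdB : 1 ≤ dB)
    (ι : Type) [Fintype ι]
    (kA kB : ι → ℝ)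
    (q : ι → (Fin dA → ℝ) × (Fin dB → ℝ)) (hq : Function.Injective q)
    (hcons : ∀ (DA : (Fin dA → ℝ) × (Fin dB → ℝ) → Fin dA → ℝ)
        (DB : (Fin dA → ℝ) × (Fin dB → ℝ) → Fin dB → ℝ)
        (cA : Fin dA → ℝ) (cB : Fin dB → ℝ),
        (∀ y : (Fin dA → ℝ) × (Fin dB → ℝ),
          (∑ a, cA a * DA y a) + (∑ b, cB b * DB y b) = 0) →
        (∑ a, cA a * ∑ i, kA i * DA (q i) a) +
          (∑ b, cB b * ∑ i, kB i * DB (q i) b) = 0) :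
    ∀ i, kA i = kB i := by
  have : Nonempty (Fin dA) := ⟨⟨0, hdA⟩⟩
  have : Nonempty (Fin dB) := ⟨⟨0, hdB⟩⟩
  have hweights :
      ∀ g : (Fin dA → ℝ) × (Fin dB → ℝ) → ℝ, ∑ j, (kB - kA) j * g (q j) = 0 := by
    intro g
    obtain ⟨DA, DB, cA, cB, hD, hg⟩ :=
      exists_conservative_with_component (α := Fin dA) (β := Fin dB) g
    simp_rw [Pi.sub_apply, ← hg, ← conserved_change_eq_sum_sub hD]
    exact hcons DA DB cA cB hD
  intro i
  exact (sub_eq_zero.mp (eq_zero_of_forall_sum_mul_comp_eq_zero hq hweights i)).symm
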